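/- Let α_{ij} ≥ 0 for all i,j ∈ {1,...,K}. Define, for each subset S ⊆ {1,...,K}, P_S as the set of tuples (d_1,...,d_K) with d_i = 0 for i ∈ S, 0 ≤ d_j ≤ α_{jj} for j ∉ S, and ∑_{j=1}^m d_{i_j} ≤ ∑_{j=1}^m (α_{i_j i_j} − α_{i_{j-1} i_j}) for every cyclic sequence of distinct indices in S^c. Define the TIN region P* as the set of tuples (d_1,...,d_K) such that there exist r_i ∈ [−∞, 0] with d_i = max{0, α_{ii} + r_i − max{0, max_{j≠i}(α_{ij} + r_j)}} for all i (with the convention that r_i = −∞ gives user i zero power, d_i = 0, and P^{r_i} = 0). Then P* = ⋃_{S ⊆ {1,...,K}} P_S. -/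

import Mathlib

/-- Cyclic predecessor in `Fin m`. -/
def cprev {m : ℕ} (j : Fin m) : Fin m := ⟨(j.1 + m - 1) % m, Nat.mod_lt _ j.pos⟩

/-- The polyhedral TIN region with the users in `S` silenced. -/
def PS (K : ℕ) (α : Fin K → Fin K → ℝ) (S : Set (Fin K)) : Set (Fin K → ℝ) :=
  {d : Fin K → ℝ |
    (∀ i ∈ S, d i = 0) ∧
    (∀ j ∉ S, 0 ≤ d j ∧ d j ≤ α j j) ∧
    ∀ m : ℕ, 2 ≤ m → ∀ i : Fin m → Fin K, Function.Injective i →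
      (∀ j, i j ∉ S) →
      ∑ j : Fin m, d (i j) ≤ ∑ j : Fin m, (α (i j) (i j) - α (i (cprev j)) (i j))}

/-- The TIN region: GDoF tuples achievable by power control (extended-real power
exponents `r i ∈ [-∞, 0]`, with `r i = -∞` meaning user `i` is silent) and
treating interference as noise. -/
noncomputable def TINregion (K : ℕ) (α : Fin K → Fin K → ℝ) : Set (Fin K → ℝ) :=
  {d : Fin K → ℝ | ∃ r : Fin K → EReal,
    (∀ i, r i ≤ 0) ∧
    ∀ i, (d i : EReal) =
      max 0 (((α i i : EReal) + r i) -
        max 0 (⨆ j : {j : Fin K // j ≠ i}, ((α i j.1 : EReal) + r j.1)))}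

/-!
If `r` achieves `d`, let `S` be the set of silent users. Every active user has finite exponent
`ρ i` and finite interference level `b i ≥ α i j + ρ j`, with `d i = α i i + ρ i - b i`; along a
cycle of active users the exponents telescope, which is the cycle inequality of `P_S`.

Conversely, for `d ∈ P_S` the cycle inequalities say that in the digraph on the active users with
vertex weights `d i - α i i` and edge weights `α i j` no cycle has positive weight. The exponent of
an active user is its potential, the largest weight of a simple path starting there. Removing
cycles shows it satisfies the Bellman equation
`x i = d i - α i i + max 0 (max_{j ≠ i} (α i j + x j))`, which is exactly the TIN rate equation;
silent users get exponent `⊥`.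
-/

section Cyclic

lemma cprev_zero {n : ℕ} : cprev (0 : Fin (n + 1)) = Fin.last n := by
  ext
  simp [cprev]

lemma cprev_succ {n : ℕ} (j : Fin n) : cprev j.succ = j.castSucc := by
  ext
  simp only [cprev, Fin.val_succ, Fin.val_castSucc]
  rw [show j.1 + 1 + (n + 1) - 1 = j.1 + (n + 1) by omega, Nat.add_mod_right,
    Nat.mod_eq_of_lt (by omega)]

lemma sum_cprev {β : Type*} [AddCommMonoid β] {n : ℕ} (g : Fin (n + 1) → Fin (n + 1) → β) :
    ∑ j, g (cprev j) j = g (Fin.last n) 0 + ∑ j : Fin n, g j.castSucc j.succ := by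
  simp [Fin.sum_univ_succ, cprev_zero, cprev_succ]

lemma sum_comp_cprev {β : Type*} [AddCommMonoid β] {n : ℕ} (f : Fin (n + 1) → β) :
    ∑ j, f (cprev j) = ∑ j, f j := by
  rw [sum_cprev (fun a _ => f a), Fin.sum_univ_castSucc, add_comm]

lemma cprev_ne {n : ℕ} (hn : n ≠ 0) (j : Fin (n + 1)) : cprev j ≠ j := by
  cases j using Fin.cases with
  | zero => rw [cprev_zero]; exact Fin.ext_iff.not.mpr (by simpa using hn)
  | succ k => rw [cprev_succ]; exact Fin.castSucc_lt_succ.ne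

end Cyclic

section PathWeight

variable {K : ℕ} (α : Fin K → Fin K → ℝ) (d : Fin K → ℝ)

def pathWeight : List (Fin K) → ℝ
  | [] => 0
  | [a] => d a - α a a
  | a :: b :: l => d a - α a a + α a b + pathWeight (b :: l)

@[simp] lemma pathWeight_singleton (a : Fin K) : pathWeight α d [a] = d a - α a a := rfl

@[simp] lemma pathWeight_cons_cons (a b : Fin K) (l : List (Fin K)) :
    pathWeight α d (a :: b :: l) = d a - α a a + α a b + pathWeight α d (b :: l) := rfl

lemma pathWeight_append_cons (p : List (Fin K)) (hp : p ≠ []) (b : Fin K) (s : List (Fin K)) :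
    pathWeight α d (p ++ b :: s) =
      pathWeight α d p + α (p.getLast hp) b + pathWeight α d (b :: s) := by
  induction p with
  | nil => contradiction
  | cons a p ih =>
    cases p with
    | nil => simp
    | cons c t =>
      simp only [List.cons_append, pathWeight_cons_cons, List.getLast_cons_cons]
      rw [← List.cons_append, ih (List.cons_ne_nil c t)]
      ring

lemma pathWeight_ofFn {n : ℕ} (p : Fin (n + 1) → Fin K) :
    pathWeight α d (List.ofFn p) =
      ∑ j, (d (p j) - α (p j) (p j)) + ∑ j : Fin n, α (p j.castSucc) (p j.succ) := by
  induction n with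
  | zero => simp
  | succ n ih =>
    have hp : List.ofFn p = p 0 :: List.ofFn fun j => p j.succ := List.ofFn_succ
    rw [hp, List.ofFn_succ, pathWeight_cons_cons, ← List.ofFn_succ (f := fun j => p j.succ),
      ih fun j => p j.succ]
    conv_rhs => rw [Fin.sum_univ_succ (n := n), Fin.sum_univ_succ (n := n + 1)]
    simp only [Fin.castSucc_zero, Fin.succ_castSucc]
    ring

end PathWeight

section Cycles

variable {K : ℕ} {α : Fin K → Fin K → ℝ} {d : Fin K → ℝ} {S : Set (Fin K)}

lemma not_mem_of_mem_PS (hd : d ∈ PS K α S) {a : Fin K} (ha : 0 < d a) : a ∉ S :=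
  fun haS => ha.ne' (hd.1 a haS)

lemma pathWeight_cycle_nonpos (hd : d ∈ PS K α S) {a : Fin K} {l : List (Fin K)}
    (hnd : (a :: l).Nodup) (hl : l ≠ []) (hpos : ∀ b ∈ a :: l, 0 < d b) :
    pathWeight α d (a :: l) + α ((a :: l).getLast (List.cons_ne_nil a l)) a ≤ 0 := by
  set p : Fin (l.length + 1) → Fin K := (a :: l).get
  have hcycle := hd.2.2 (l.length + 1) (Nat.succ_le_succ (List.length_pos_iff.mpr hl))
    p (List.nodup_iff_injective_get.mp hnd)
    fun j => not_mem_of_mem_PS hd (hpos _ (List.get_mem (a :: l) j))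
  have hweight := pathWeight_ofFn α d p
  rw [show List.ofFn p = a :: l from List.ofFn_get (a :: l)] at hweight
  have hlast : (a :: l).getLast (List.cons_ne_nil a l) = p (Fin.last l.length) := by
    simp [p, List.getLast_eq_getElem]
  have hfirst : p 0 = a := rfl
  rw [Finset.sum_sub_distrib, sum_cprev (fun i j => α (p i) (p j)), hfirst] at hcycle
  rw [hweight, hlast, Finset.sum_sub_distrib]
  linarith

lemma pathWeight_nonpos (hα : ∀ i j, 0 ≤ α i j) (hd : d ∈ PS K α S) {l : List (Fin K)}
    (hnd : l.Nodup) (hpos : ∀ b ∈ l, 0 < d b) : pathWeight α d l ≤ 0 := by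
  match l, hnd, hpos with
  | [], _, _ => exact le_rfl
  | [a], _, hpos =>
    have := (hd.2.1 a (not_mem_of_mem_PS hd (hpos a (List.mem_singleton_self a)))).2
    simpa using this
  | a :: b :: l, hnd, hpos =>
    have := pathWeight_cycle_nonpos hd hnd (List.cons_ne_nil b l) hpos
    have := hα ((a :: b :: l).getLast (List.cons_ne_nil _ _)) a
    linarith

end Cycles

section Potential

variable {K : ℕ} (α : Fin K → Fin K → ℝ) (d : Fin K → ℝ)

def simplePaths (i : Fin K) : Set (List (Fin K)) :=
  {l | l.Nodup ∧ (∀ a ∈ l, 0 < d a) ∧ l.head? = some i}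

noncomputable def potential (i : Fin K) : ℝ :=
  sSup (pathWeight α d '' simplePaths d i)

variable {α d}

lemma finite_pathWeight_image_simplePaths (i : Fin K) :
    (pathWeight α d '' simplePaths d i).Finite :=
  ((List.finite_length_le (Fin K) K).subset fun l hl => by
    simpa using hl.1.length_le_card).image _

lemma singleton_mem_simplePaths {i : Fin K} (hi : 0 < d i) : [i] ∈ simplePaths d i :=
  ⟨List.nodup_singleton i, by simpa using hi, rfl⟩

lemma pathWeight_le_potential {i : Fin K} {l : List (Fin K)} (hl : l ∈ simplePaths d i) :
    pathWeight α d l ≤ potential α d i :=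
  le_csSup (finite_pathWeight_image_simplePaths i).bddAbove (Set.mem_image_of_mem _ hl)

lemma exists_pathWeight_eq_potential {i : Fin K} (hi : 0 < d i) :
    ∃ l ∈ simplePaths d i, pathWeight α d l = potential α d i :=
  Set.Nonempty.csSup_mem ⟨_, Set.mem_image_of_mem _ (singleton_mem_simplePaths hi)⟩
    (finite_pathWeight_image_simplePaths i)

variable {S : Set (Fin K)}

lemma potential_nonpos (hα : ∀ i j, 0 ≤ α i j) (hd : d ∈ PS K α S) {i : Fin K} (hi : 0 < d i) :
    potential α d i ≤ 0 := by
  obtain ⟨l, hl, hl_eq⟩ := exists_pathWeight_eq_potential (α := α) hi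
  exact hl_eq ▸ pathWeight_nonpos hα hd hl.1 hl.2.1

lemma sub_le_potential {i : Fin K} (hi : 0 < d i) : d i - α i i ≤ potential α d i :=
  pathWeight_le_potential (singleton_mem_simplePaths hi)

/-- Prepending `i` to a simple path from `j` gives a walk whose only possible repetition is `i`;
cutting out the resulting cycle through `i` does not decrease the weight. -/
lemma add_potential_le_potential (hd : d ∈ PS K α S) {i j : Fin K} (hi : 0 < d i) (hj : 0 < d j)
    (hij : j ≠ i) : d i - α i i + α i j + potential α d j ≤ potential α d i := by
  obtain ⟨l, ⟨hnd, hpos, hhead⟩, hl_eq⟩ := exists_pathWeight_eq_potential (α := α) hj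
  obtain ⟨t, rfl⟩ : ∃ t, l = j :: t := by
    cases l with
    | nil => simp at hhead
    | cons b t => exact ⟨t, by simpa using hhead⟩
  have hpos' : ∀ b ∈ i :: j :: t, 0 < d b := by simpa [hi] using hpos
  rw [← hl_eq, ← pathWeight_cons_cons]
  by_cases hmem : i ∈ j :: t
  · obtain ⟨u, w, hsplit⟩ := List.append_of_mem hmem
    have hu : u ≠ [] := by rintro rfl; exact hij (List.cons.inj hsplit).1
    rw [hsplit] at hnd hpos'
    rw [hsplit, ← List.cons_append, pathWeight_append_cons α d _ (List.cons_ne_nil i u)]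
    have hcycle := pathWeight_cycle_nonpos hd
      ((List.nodup_middle.mp hnd).sublist ((List.sublist_append_left u w).cons_cons i)) hu
      fun b hb => hpos' b (((List.sublist_append_left u _).cons_cons i).subset hb)
    have hrest := pathWeight_le_potential (α := α)
      ⟨hnd.sublist (List.sublist_append_right u _),
        fun b hb => hpos' b (((List.sublist_append_right u _).cons i).subset hb), rfl⟩
    linarith
  · exact pathWeight_le_potential ⟨List.nodup_cons.mpr ⟨hmem, hnd⟩, hpos', rfl⟩

lemma potential_eq_or_exists_le {i : Fin K} (hi : 0 < d i) :
    potential α d i = d i - α i i ∨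
      ∃ j, 0 < d j ∧ j ≠ i ∧ potential α d i ≤ d i - α i i + α i j + potential α d j := by
  obtain ⟨l, ⟨hnd, hpos, hhead⟩, hl_eq⟩ := exists_pathWeight_eq_potential (α := α) hi
  rw [← hl_eq]
  match l, hnd, hpos, hhead with
  | [b], _, _, hhead =>
    obtain rfl : b = i := by simpa using hhead
    exact Or.inl rfl
  | b :: j :: t, hnd, hpos, hhead =>
    obtain rfl : b = i := by simpa using hhead
    refine Or.inr ⟨j, hpos j (by simp), fun hji => ?_, ?_⟩
    · exact (List.nodup_cons.mp hnd).1 (hji ▸ List.mem_cons_self)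
    · rw [pathWeight_cons_cons]
      have := pathWeight_le_potential (α := α)
        ⟨hnd.of_cons, fun a ha => hpos a (List.mem_cons_of_mem _ ha), rfl⟩
      linarith

end Potential

section Achievability

variable {K : ℕ} (α : Fin K → Fin K → ℝ) (d : Fin K → ℝ)

noncomputable def tinExponent (i : Fin K) : EReal :=
  if 0 < d i then (potential α d i : EReal) else ⊥

variable {α d} {S : Set (Fin K)}

lemma interference_tinExponent (hd : d ∈ PS K α S) {i : Fin K} (hi : 0 < d i) :
    max 0 (⨆ j : {j : Fin K // j ≠ i}, (α i j.1 : EReal) + tinExponent α d j.1) =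
      ((potential α d i - d i + α i i : ℝ) : EReal) := by
  apply le_antisymm
  · refine max_le (EReal.coe_nonneg.mpr (by linarith [sub_le_potential (α := α) hi])) ?_
    refine iSup_le fun ⟨j, hji⟩ => ?_
    by_cases hj : 0 < d j
    · rw [tinExponent, if_pos hj, ← EReal.coe_add, EReal.coe_le_coe_iff]
      linarith [add_potential_le_potential hd hi hj hji]
    · rw [tinExponent, if_neg hj, EReal.add_bot]
      exact bot_le
  · rcases potential_eq_or_exists_le (α := α) hi with h | ⟨j, hj, hji, hle⟩
    · rw [h, show d i - α i i - d i + α i i = 0 by ring]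
      exact le_max_left _ _
    · calc ((potential α d i - d i + α i i : ℝ) : EReal)
          ≤ (α i j : EReal) + tinExponent α d j := by
            rw [tinExponent, if_pos hj, ← EReal.coe_add, EReal.coe_le_coe_iff]
            linarith
        _ ≤ _ := le_sup_of_le_right (le_iSup_of_le ⟨j, hji⟩ le_rfl)

lemma mem_TINregion_of_mem_PS (hα : ∀ i j, 0 ≤ α i j) (hd : d ∈ PS K α S) :
    d ∈ TINregion K α := by
  refine ⟨tinExponent α d, fun i => ?_, fun i => ?_⟩
  · by_cases hi : 0 < d i
    · rw [tinExponent, if_pos hi, EReal.coe_nonpos]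
      exact potential_nonpos hα hd hi
    · rw [tinExponent, if_neg hi]
      exact bot_le
  · by_cases hi : 0 < d i
    · rw [interference_tinExponent hd hi, tinExponent, if_pos hi, ← EReal.coe_add,
        ← EReal.coe_sub,
        show α i i + potential α d i - (potential α d i - d i + α i i) = d i by ring]
      exact (max_eq_right (EReal.coe_nonneg.mpr hi.le)).symm
    · have hdi : d i = 0 := by
        by_cases hiS : i ∈ S
        · exact hd.1 i hiS
        · exact le_antisymm (not_lt.mp hi) (hd.2.1 i hiS).1
      simp [tinExponent, hdi]

end Achievability

lemma EReal.exists_coe_eq_of_coe_eq_max_sub {x a : ℝ} {r I : EReal} (hx : x ≠ 0) (hr : r ≤ 0)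
    (hI : 0 ≤ I) (h : (x : EReal) = max 0 ((a : EReal) + r - I)) :
    ∃ ρ b : ℝ, r = ρ ∧ I = b ∧ x = a + ρ - b := by
  have h' : (x : EReal) = a + r - I := by
    rcases max_choice (0 : EReal) ((a : EReal) + r - I) with h0 | h0 <;> rw [h0] at h
    · exact absurd (by exact_mod_cast h) hx
    · exact h
  have hr_top : r ≠ ⊤ := ne_top_of_le_ne_top EReal.zero_ne_top hr
  have hr_bot : r ≠ ⊥ := by rintro rfl; simp at h'
  lift r to ℝ using ⟨hr_top, hr_bot⟩
  have hI_bot : I ≠ ⊥ := ne_bot_of_le_ne_bot EReal.zero_ne_bot hI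
  have hI_top : I ≠ ⊤ := by rintro rfl; simp [EReal.sub_top] at h'
  lift I to ℝ using ⟨hI_top, hI_bot⟩
  exact ⟨r, I, rfl, rfl, by exact_mod_cast h'⟩

section Converse

variable {K : ℕ} {α : Fin K → Fin K → ℝ} {d : Fin K → ℝ}

lemma mem_PS_of_mem_TINregion (hd : d ∈ TINregion K α) :
    d ∈ PS K α {i | d i = 0} := by
  obtain ⟨r, hr, hrate⟩ := hd
  set I : Fin K → EReal := fun i => max 0 (⨆ j : {j : Fin K // j ≠ i}, (α i j.1 : EReal) + r j.1)
  have hI : ∀ i j, j ≠ i → (α i j : EReal) + r j ≤ I i := fun i j hji =>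
    le_sup_of_le_right (le_iSup_of_le ⟨j, hji⟩ le_rfl)
  have hreal : ∀ i, d i ≠ 0 → ∃ ρ b : ℝ, r i = ρ ∧ I i = b ∧ d i = α i i + ρ - b := fun i hi =>
    EReal.exists_coe_eq_of_coe_eq_max_sub hi (hr i) (le_max_left _ _) (hrate i)
  refine ⟨fun i hi => hi, fun j hj => ⟨?_, ?_⟩, ?_⟩
  · exact_mod_cast (hrate j).symm ▸ le_max_left (0 : EReal) _
  · obtain ⟨ρ, b, hρ, hb, hdj⟩ := hreal j hj
    have : ρ ≤ 0 := EReal.coe_nonpos.mp (hρ ▸ hr j)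
    have : 0 ≤ b := EReal.coe_nonneg.mp (hb ▸ le_max_left _ _)
    linarith
  · intro m hm i hinj hS
    obtain ⟨n, rfl⟩ : ∃ n, m = n + 1 := ⟨m - 1, by omega⟩
    choose ρ b hρ hb hdb using fun j => hreal (i j) (hS j)
    have hstep : ∀ j, d (i (cprev j)) ≤
        α (i (cprev j)) (i (cprev j)) + ρ (cprev j) - (α (i (cprev j)) (i j) + ρ j) := by
      intro j
      have := hI (i (cprev j)) (i j) fun h => cprev_ne (by omega) j (hinj h.symm)
      rw [hρ, hb, ← EReal.coe_add, EReal.coe_le_coe_iff] at this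
      linarith [hdb (cprev j)]
    calc ∑ j, d (i j) = ∑ j, d (i (cprev j)) := (sum_comp_cprev fun j => d (i j)).symm
      _ ≤ ∑ j, (α (i (cprev j)) (i (cprev j)) + ρ (cprev j) - (α (i (cprev j)) (i j) + ρ j)) :=
        Finset.sum_le_sum fun j _ => hstep j
      _ = ∑ j, (α (i j) (i j) - α (i (cprev j)) (i j)) := by
        simp only [Finset.sum_sub_distrib, Finset.sum_add_distrib,
          sum_comp_cprev fun j => α (i j) (i j), sum_comp_cprev ρ]
        ring

end Converse

theorem stmt_12_general (K : ℕ) (α : Fin K → Fin K → ℝ)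
    (hα : ∀ i j, 0 ≤ α i j) :
    TINregion K α = ⋃ S : Set (Fin K), PS K α S := by
  ext d
  simp only [Set.mem_iUnion]
  exact ⟨fun hd => ⟨_, mem_PS_of_mem_TINregion hd⟩,
    fun ⟨_, hd⟩ => mem_TINregion_of_mem_PS hα hd⟩

theorem stmt_12 (K : ℕ) (hK : 1 ≤ K) (α : Fin K → Fin K → ℝ)
    (hα : ∀ i j, 0 ≤ α i j) :
    TINregion K α = ⋃ S : Set (Fin K), PS K α S :=
  stmt_12_general K α hα
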